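/- Let U ⊆ ℂⁿ be a bounded open connected set, g ∈ ℂ, ξ ∈ U ∩ 𝕌ⁿ, and ε > 0. Then there exists a constant A > 0 such that |â^cs_ν(ξ;k^(c))| ≤ A·e^{ε⟨ν,ρ⟩} for all c ≥ 0 and all ν ∈ ℤⁿ with ν ≥ 0. -/

import Mathlib

open scoped BigOperators
open Finset Filter Topology

noncomputable section

namespace TodaBC

variable {n : ℕ}

/-- The bilinear pairing `⟨ξ,x⟩ = ∑_j ξ_j x_j` on `ℂⁿ`. -/
def pc (ξ x : Fin n → ℂ) : ℂ := ∑ j, ξ j * x j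

/-- Complexification of an integer vector. -/
def zc (ν : Fin n → ℤ) : Fin n → ℂ := fun j => (ν j : ℂ)

/-- Complexification of a real vector. -/
def cr (x : Fin n → ℝ) : Fin n → ℂ := fun j => (x j : ℂ)

/-- `ρ = (n, n-1, …, 1)` as a complex vector (0-indexed: `ρ_j = n - j`). -/
def rhoC (n : ℕ) : Fin n → ℂ := fun j => ((n - (j : ℕ) : ℕ) : ℂ)

/-- `ρ = (n, n-1, …, 1)` as a real vector. -/
def rhoR (n : ℕ) : Fin n → ℝ := fun j => ((n - (j : ℕ) : ℕ) : ℝ)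

/-- `⟨ν,ρ⟩` for an integer vector `ν`. -/
def rp (ν : Fin n → ℤ) : ℤ := ∑ j, ν j * ((n : ℤ) - ((j : ℕ) : ℤ))

/-- `ν ≥ 0` : all initial partial sums of `ν` are nonnegative. -/
def dominant (ν : Fin n → ℤ) : Prop := ∀ k : Fin n, 0 ≤ ∑ j ∈ Finset.Iic k, ν j

/-- The domain `𝕌ⁿ = {ξ ∈ ℂⁿ ∣ ⟨ν-2ξ,ν⟩ ≠ 0 for all ν > 0}`. -/
def Uset (n : ℕ) : Set (Fin n → ℂ) :=
  {ξ | ∀ ν : Fin n → ℤ, dominant ν → ν ≠ 0 → pc (zc ν - 2 • ξ) (zc ν) ≠ 0}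

/-- Standard basis vector of `ℤⁿ` with (0-based) index `k`. -/
def eZ (n : ℕ) (k : ℕ) : Fin n → ℤ := fun i => if (i : ℕ) = k then 1 else 0

/-- RHS of the Toda Harish-Chandra recurrence: `∑_{α ∈ S} a_α a_{ν-α}`. -/
def todaRHS (g : ℂ) (a : (Fin n → ℤ) → ℂ) (ν : Fin n → ℤ) : ℂ :=
  (∑ k ∈ Finset.range (n - 1), 2 * a (ν - (eZ n k - eZ n (k + 1))))
    + g * a (ν - eZ n (n - 1)) + (1 / 4) * a (ν - 2 • eZ n (n - 1))

/-- `a` is the family of Harish-Chandra coefficients `ν ↦ a_ν(ξ;g)`. -/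
def IsHC (g : ℂ) (ξ : Fin n → ℂ) (a : (Fin n → ℤ) → ℂ) : Prop :=
  a 0 = 1 ∧ (∀ ν, ¬ dominant ν → a ν = 0) ∧
    ∀ ν, dominant ν → ν ≠ 0 →
      a ν = (pc (zc ν - 2 • ξ) (zc ν))⁻¹ * todaRHS g a ν

/-- Term of the Harish-Chandra series: `a_ν e^{⟨ξ-ν,x⟩}`. -/
def hcTerm (a : (Fin n → ℤ) → ℂ) (ξ x : Fin n → ℂ) (ν : Fin n → ℤ) : ℂ :=
  a ν * Complex.exp (pc (ξ - zc ν) x)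

/-- The Toda + Morse potential `∑_{α ∈ S} a_α e^{-⟨α,x⟩}`. -/
def potential (n : ℕ) (g : ℂ) (x : Fin n → ℂ) : ℂ :=
  (∑ k ∈ Finset.range (n - 1), 2 * Complex.exp (- pc (zc (eZ n k - eZ n (k + 1))) x))
    + g * Complex.exp (- pc (zc (eZ n (n - 1))) x)
    + (1 / 4) * Complex.exp (- pc (zc (2 • eZ n (n - 1))) x)

/-- `∂²f/∂x_j²` evaluated at `x`. -/
def secondPartial (f : (Fin n → ℂ) → ℂ) (j : Fin n) (x : Fin n → ℂ) : ℂ :=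
  iteratedDeriv 2 (fun s => f (Function.update x j s)) (x j)

/-- `ℂⁿ_{reg,+}`. -/
def regPlus (n : ℕ) : Set (Fin n → ℂ) :=
  {ξ | (∀ j, ∀ m : ℤ, 0 < m → 2 * ξ j ≠ (m : ℂ)) ∧
    ∀ j k : Fin n, j < k → ∀ m : ℤ, 0 < m → ξ j + ξ k ≠ (m : ℂ) ∧ ξ j - ξ k ≠ (m : ℂ)}

/-- `ℂⁿ_{reg}`. -/
def regSet (n : ℕ) : Set (Fin n → ℂ) :=
  {ξ | (∀ j, ∀ m : ℤ, 2 * ξ j ≠ (m : ℂ)) ∧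
    ∀ j k : Fin n, j < k → ∀ m : ℤ, ξ j + ξ k ≠ (m : ℂ) ∧ ξ j - ξ k ≠ (m : ℂ)}

/-- `ℂⁿ_{reg,-}`. -/
def regMinus (n : ℕ) : Set (Fin n → ℂ) :=
  {ξ | (∀ j, ∀ m : ℤ, m ≤ 0 → 2 * ξ j ≠ (m : ℂ)) ∧
    ∀ j k : Fin n, j < k → ∀ m : ℤ, m ≤ 0 → ξ j + ξ k ≠ (m : ℂ) ∧ ξ j - ξ k ≠ (m : ℂ)}

/-- The condition `x_k - x_{k+1} ≥ R` for `k = 1,…,n` (with `x_{n+1} = 0`). -/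
def spaced (n : ℕ) (R : ℝ) (x : Fin n → ℝ) : Prop :=
  ∀ k : Fin n, (if h : (k : ℕ) + 1 < n then x ⟨(k : ℕ) + 1, h⟩ else 0) + R ≤ x k

/-- The Toda `c`-function `C(ξ;g)`. -/
def Cfun (g : ℂ) (ξ : Fin n → ℂ) : ℂ :=
  (∏ j, Complex.Gamma (2 * ξ j) / Complex.Gamma (1 / 2 + g + ξ j)) *
    ∏ j, ∏ k ∈ Finset.Ioi j, Complex.Gamma (ξ j + ξ k) * Complex.Gamma (ξ j - ξ k)

/-- Action of the signed permutation `(σ,ε)` on `ℂⁿ`: `(wξ)_j = ε_j ξ_{σ_j}`. -/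
def wAct (σ : Equiv.Perm (Fin n)) (ε : Fin n → Bool) (ξ : Fin n → ℂ) : Fin n → ℂ :=
  fun j => (if ε j then 1 else -1) * ξ (σ j)

/-- The hyperoctahedral Whittaker function `Φ_ξ(x;g) = ∑_{w ∈ W} C(wξ;g) φ_{wξ}(x;g)`,
built from an extension `F` of the fundamental Whittaker function. -/
def PhiOf (F : (Fin n → ℂ) → (Fin n → ℂ) → ℂ → ℂ) (g : ℂ) (ξ x : Fin n → ℂ) : ℂ :=
  ∑ σ : Equiv.Perm (Fin n), ∑ ε : Fin n → Bool,
    Cfun g (wAct σ ε ξ) * F (wAct σ ε ξ) x g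

/-- `F` is the holomorphic extension, to `ℂⁿ_{reg,+} × ℂⁿ × ℂ`, of the fundamental Whittaker
function attached to the coefficient family `a`. -/
def IsPhiExt (n : ℕ) (a : (Fin n → ℂ) → ℂ → (Fin n → ℤ) → ℂ)
    (F : (Fin n → ℂ) → (Fin n → ℂ) → ℂ → ℂ) : Prop :=
  DifferentiableOn ℂ (fun p : (Fin n → ℂ) × (Fin n → ℂ) × ℂ => F p.1 p.2.1 p.2.2)
      ((regPlus n) ×ˢ (Set.univ : Set (Fin n → ℂ)) ×ˢ (Set.univ : Set ℂ)) ∧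
    ∀ ξ ∈ Uset n ∩ regPlus n, ∀ x : Fin n → ℂ, ∀ g : ℂ,
      HasSum (fun ν : Fin n → ℤ => hcTerm (a ξ g) ξ x ν) (F ξ x g)

/-- Sign vector with value `+1` on `P`, `-1` on `M`, `0` elsewhere. -/
def es (P M : Finset (Fin n)) (j : Fin n) : ℂ :=
  if j ∈ P then 1 else if j ∈ M then -1 else 0

/-- The coefficient `V_{εJ}(ξ;g)` where `J = P ∪ M`, `ε = +1` on `P` and `-1` on `M`. -/
def Vco (g : ℂ) (ξ : Fin n → ℂ) (P M : Finset (Fin n)) : ℂ :=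
  (∏ j ∈ P ∪ M, (1 / 2 + g + es P M j * ξ j) / (2 * ξ j * (2 * ξ j + es P M j)))
    * (∏ j ∈ P ∪ M, ∏ k ∈ (P ∪ M)ᶜ, (ξ j ^ 2 - ξ k ^ 2)⁻¹)
    * ∏ j ∈ P ∪ M, ∏ j' ∈ (P ∪ M).filter (fun j' => j < j'),
        (es P M j * ξ j + es P M j' * ξ j')⁻¹ * (1 + es P M j * ξ j + es P M j' * ξ j')⁻¹

/-- The coefficient `U_{K,p}(ξ;g)`. -/
def Uco (g : ℂ) (ξ : Fin n → ℂ) (K : Finset (Fin n)) (p : ℕ) : ℂ :=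
  (-1 : ℂ) ^ (p * (p + 1) / 2) *
    ∑ P : Finset (Fin n), ∑ M : Finset (Fin n),
      if P ⊆ K ∧ M ⊆ K ∧ Disjoint P M ∧ P.card + M.card = p then
        (∏ i ∈ P ∪ M, (1 / 2 + g + es P M i * ξ i) / (2 * ξ i * (2 * ξ i + es P M i)))
          * (∏ i ∈ P ∪ M, ∏ k ∈ K \ (P ∪ M), (ξ i ^ 2 - ξ k ^ 2)⁻¹)
          * ∏ i ∈ P ∪ M, ∏ i' ∈ (P ∪ M).filter (fun i' => i < i'),
              (es P M i * ξ i + es P M i' * ξ i')⁻¹ *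
                (1 + es P M i * ξ i + es P M i' * ξ i')⁻¹
      else 0

/-- LHS of the dual difference equation of order `ℓ`, applied to a function `Φf` of the
spectral variable. -/
def diffLHS (g : ℂ) (ℓ : ℕ) (ξ : Fin n → ℂ) (Φf : (Fin n → ℂ) → ℂ) : ℂ :=
  ∑ P : Finset (Fin n), ∑ M : Finset (Fin n),
    if Disjoint P M ∧ P.card + M.card ≤ ℓ then
      Uco g ξ (P ∪ M)ᶜ (ℓ - (P.card + M.card)) * Vco g ξ P M * Φf (ξ + es P M)
    else 0

/-- The set of linear forms `ξ ↦ 2ξ_j`, `ξ ↦ ξ_j ± ξ_k` (`j < k`). -/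
def LinForms (n : ℕ) : Set ((Fin n → ℂ) → ℂ) :=
  {L | (∃ j, L = fun ξ => 2 * ξ j) ∨
    ∃ j k : Fin n, j < k ∧ ((L = fun ξ => ξ j + ξ k) ∨ L = fun ξ => ξ j - ξ k)}

/-- Exponential damping factor `e^{-c·l·⟨α,ρ⟩}`. -/
def damp (n : ℕ) (c : ℝ) (l : ℕ) (α : Fin n → ℤ) : ℂ :=
  Complex.exp (((-(c * (l : ℝ) * ((rp α : ℤ) : ℝ))) : ℝ) : ℂ)

/-- RHS of the (rescaled) Calogero–Sutherland Harish-Chandra recurrence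
`∑_{α ∈ R₊} ∑_{l ≥ 1} l e^{-c l ⟨α,ρ⟩} a^{cs}_α(k) a_{ν - lα}` (a finite sum since the
terms with `l > ⟨ν,ρ⟩` vanish). -/
def csRHS (k : ℂ × ℂ × ℂ) (c : ℝ) (a : (Fin n → ℤ) → ℂ) (ν : Fin n → ℤ) : ℂ :=
  ∑ l ∈ Finset.Icc 1 (rp ν).toNat, (l : ℂ) *
    ((∑ j : Fin n, damp n c l (eZ n (j : ℕ)) * (k.2.1 * (k.2.1 + 2 * k.2.2 - 1)) *
        a (ν - l • eZ n (j : ℕ)))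
      + (∑ j : Fin n, damp n c l (2 • eZ n (j : ℕ)) * (4 * k.2.2 * (k.2.2 - 1)) *
          a (ν - l • (2 • eZ n (j : ℕ))))
      + ∑ j : Fin n, ∑ j' ∈ Finset.Ioi j,
          (damp n c l (eZ n (j : ℕ) + eZ n (j' : ℕ)) * (2 * k.1 * (k.1 - 1)) *
              a (ν - l • (eZ n (j : ℕ) + eZ n (j' : ℕ)))
            + damp n c l (eZ n (j : ℕ) - eZ n (j' : ℕ)) * (2 * k.1 * (k.1 - 1)) *
                a (ν - l • (eZ n (j : ℕ) - eZ n (j' : ℕ)))))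

/-- `a` is the family of Calogero–Sutherland Harish-Chandra coefficients `ν ↦ a^{cs}_ν(ξ;k)`. -/
def IsHCcs (k : ℂ × ℂ × ℂ) (ξ : Fin n → ℂ) (a : (Fin n → ℤ) → ℂ) : Prop :=
  a 0 = 1 ∧ (∀ ν, ¬ dominant ν → a ν = 0) ∧
    ∀ ν, dominant ν → ν ≠ 0 → pc (zc ν - 2 • ξ) (zc ν) * a ν = csRHS k 0 a ν

/-- `a` is the family of rescaled coefficients `ν ↦ â^{cs}_ν(ξ;k)` (with damping `c` and
initial value `Δval`). -/
def IsHCcsResc (k : ℂ × ℂ × ℂ) (c : ℝ) (Δval : ℂ) (ξ : Fin n → ℂ)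
    (a : (Fin n → ℤ) → ℂ) : Prop :=
  a 0 = Δval ∧ (∀ ν, ¬ dominant ν → a ν = 0) ∧
    ∀ ν, dominant ν → ν ≠ 0 → pc (zc ν - 2 • ξ) (zc ν) * a ν = csRHS k c a ν

/-- The open Weyl chamber `𝔸ⁿ = {x ∈ ℝⁿ ∣ x₁ > x₂ > ⋯ > xₙ > 0}`. -/
def Achamber (n : ℕ) : Set (Fin n → ℝ) :=
  {x | (∀ j k : Fin n, j < k → x k < x j) ∧ ∀ j, 0 < x j}

/-- The coupling parameters `k^{(c)} = (k₀^{(c)}, 2g, k₂^{(c)})` with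
`k₀^{(c)}(k₀^{(c)}-1) = e^c`, `k₂^{(c)}(k₂^{(c)}-1) = e^{2c}/16`, `k₀^{(c)}, k₂^{(c)} > 0`. -/
def kParam (g : ℂ) (c : ℝ) : ℂ × ℂ × ℂ :=
  ((((1 + Real.sqrt (1 + 4 * Real.exp c)) / 2 : ℝ) : ℂ), 2 * g,
    (((1 + Real.sqrt (1 + Real.exp c ^ 2 / 4)) / 2 : ℝ) : ℂ))

/-- The Calogero–Sutherland `c`-function `C^{cs}(ξ;k)`. -/
def Ccs (k : ℂ × ℂ × ℂ) (ξ : Fin n → ℂ) : ℂ :=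
  (∏ j, Complex.Gamma (2 * ξ j) * Complex.Gamma (k.2.1 / 2 + ξ j) /
      (Complex.Gamma (k.2.1 + 2 * ξ j) * Complex.Gamma (k.2.1 / 2 + k.2.2 + ξ j))) *
    ∏ j, ∏ k' ∈ Finset.Ioi j,
      Complex.Gamma (ξ j + ξ k') * Complex.Gamma (ξ j - ξ k') /
        (Complex.Gamma (k.1 + ξ j + ξ k') * Complex.Gamma (k.1 + ξ j - ξ k'))

/-- The normalization constant `γ(k)`. -/
def gammaNorm (n : ℕ) (k : ℂ × ℂ × ℂ) : ℂ :=
  Complex.Gamma k.1 ^ (n * (n - 1)) *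
    (Complex.Gamma k.2.1 * Complex.Gamma (k.2.1 / 2 + k.2.2) /
      (Complex.Gamma (k.2.1 / 2) * Complex.Gamma (1 / 2 + k.2.1 / 2))) ^ n

/-! Write `m = ⟨ν,ρ⟩`. For `c ≥ 0` and `l ≥ 1` the damped couplings `e^{-cl⟨α,ρ⟩} a^cs_α(k^(c))`
are bounded independently of `c`, so the recurrence bounds `|⟨ν-2ξ,ν⟩ â_ν|` by a constant `C`
times `∑_l l e^{-εl}` times the bound already established at the weights `m - l`.
As `|⟨ν-2ξ,ν⟩|` grows linearly in `m`, beyond some weight `N` it exceeds `C` and a bound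
`A e^{εm}` propagates unchanged. Below `N` only finitely many `ν ≥ 0` occur, and
`ξ ∈ 𝕌ⁿ` gives a `δ > 0` with `|⟨ν-2ξ,ν⟩| ≥ δ` for them, so each such step costs at most a
factor `C/δ`, whatever `c` is. -/

section DominantWeights

lemma rp_eq_sum_sum_Iic (ν : Fin n → ℤ) : rp ν = ∑ k, ∑ i ∈ Iic k, ν i := by
  calc rp ν = ∑ i, ∑ _k ∈ Ici i, ν i := by
        refine sum_congr rfl fun i _ => ?_
        rw [sum_const, Fin.card_Ici, nsmul_eq_mul, mul_comm, Nat.cast_sub i.isLt.le]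
    _ = ∑ k, ∑ i ∈ Iic k, ν i := sum_comm' fun i k => by simp

variable {ν : Fin n → ℤ}

lemma sum_Iic_le_rp (hν : dominant ν) (k : Fin n) : ∑ i ∈ Iic k, ν i ≤ rp ν := by
  rw [rp_eq_sum_sum_Iic]
  exact single_le_sum (fun k _ => hν k) (mem_univ k)

lemma rp_nonneg (hν : dominant ν) : 0 ≤ rp ν := by
  rw [rp_eq_sum_sum_Iic]
  exact sum_nonneg fun k _ => hν k

lemma abs_le_rp (hν : dominant ν) (j : Fin n) : |ν j| ≤ rp ν := by
  have hsplit : ∑ i ∈ Iic j, ν i = ∑ i ∈ Iio j, ν i + ν j := by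
    rw [← Iio_insert, sum_insert (by simp), add_comm]
  have hIio : 0 ≤ ∑ i ∈ Iio j, ν i ∧ ∑ i ∈ Iio j, ν i ≤ rp ν := by
    rcases Nat.eq_zero_or_pos (j : ℕ) with hj | hj
    · have : Iio j = ∅ := by ext i; simp [Fin.lt_def, hj]
      simp [this, rp_nonneg hν]
    · set j' : Fin n := ⟨j - 1, by omega⟩
      have : Iio j = Iic j' := by
        ext i; simp only [mem_Iio, mem_Iic, Fin.lt_def, Fin.le_def, j']; omega
      exact this ▸ ⟨hν j', sum_Iic_le_rp hν j'⟩
  rw [abs_le]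
  constructor <;> linarith [hν j, sum_Iic_le_rp hν j]

lemma eq_zero_of_rp_eq_zero (hν : dominant ν) (h : rp ν = 0) : ν = 0 :=
  funext fun j => abs_nonpos_iff.mp (h ▸ abs_le_rp hν j)

end DominantWeights

lemma rp_add (ν μ : Fin n → ℤ) : rp (ν + μ) = rp ν + rp μ := by
  simp only [rp, Pi.add_apply, add_mul, sum_add_distrib]

lemma rp_sub (ν μ : Fin n → ℤ) : rp (ν - μ) = rp ν - rp μ := by
  simp only [rp, Pi.sub_apply, sub_mul, sum_sub_distrib]

lemma rp_nsmul (l : ℕ) (ν : Fin n → ℤ) : rp (l • ν) = l * rp ν := by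
  simp only [rp, Pi.smul_apply, mul_sum]
  simp only [nsmul_eq_mul, mul_assoc]

lemma rp_eZ (j : Fin n) : rp (eZ n j) = n - j := by
  rw [rp, sum_eq_single j (fun i _ hi => by simp [eZ, Fin.val_ne_of_ne hi]) (by simp)]
  simp [eZ]

lemma re_pc (ξ : Fin n → ℂ) (ν : Fin n → ℤ) :
    (pc (zc ν - 2 • ξ) (zc ν)).re = ∑ j, ((ν j : ℝ) ^ 2 - 2 * (ξ j).re * ν j) := by
  simp only [pc, zc, Complex.re_sum, Pi.sub_apply, nsmul_eq_mul]
  refine sum_congr rfl fun j _ => ?_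
  simp [Complex.mul_re]
  ring

lemma rp_le_norm_pc (ξ : Fin n → ℂ) (ν : Fin n → ℤ) :
    (rp ν : ℝ) ≤ n * (‖pc (zc ν - 2 • ξ) (zc ν)‖ + ∑ j, (2 * ‖ξ j‖ + 1) ^ 2 / 4) := by
  have hrp : (rp ν : ℝ) ≤ n * ∑ j, |(ν j : ℝ)| := by
    simp only [rp, Int.cast_sum, Int.cast_mul, Int.cast_sub, Int.cast_natCast, mul_sum]
    refine sum_le_sum fun j _ => ?_
    have hj : ((j : ℕ) : ℝ) ≤ n := by exact_mod_cast j.isLt.le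
    have hj0 : (0 : ℝ) ≤ (j : ℕ) := Nat.cast_nonneg _
    calc (ν j : ℝ) * (n - (j : ℕ)) ≤ |(ν j : ℝ)| * (n - (j : ℕ)) :=
          mul_le_mul_of_nonneg_right (le_abs_self _) (by linarith)
      _ ≤ n * |(ν j : ℝ)| := by nlinarith [abs_nonneg (ν j : ℝ)]
  -- completing the square: `x ^ 2 - 2 t x ≥ |x| - (2 r + 1) ^ 2 / 4` whenever `|t| ≤ r`
  have hcoord : ∀ j,
      |(ν j : ℝ)| ≤ ((ν j : ℝ) ^ 2 - 2 * (ξ j).re * ν j) + (2 * ‖ξ j‖ + 1) ^ 2 / 4 := by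
    intro j
    have hre : |(ξ j).re| ≤ ‖ξ j‖ := Complex.abs_re_le_norm _
    have : (ξ j).re * ν j ≤ ‖ξ j‖ * |(ν j : ℝ)| := by
      calc (ξ j).re * ν j ≤ |(ξ j).re * ν j| := le_abs_self _
        _ = |(ξ j).re| * |(ν j : ℝ)| := abs_mul _ _
        _ ≤ ‖ξ j‖ * |(ν j : ℝ)| := by gcongr
    nlinarith [sq_abs (ν j : ℝ), sq_nonneg (|(ν j : ℝ)| - ‖ξ j‖ - 1 / 2)]
  have hsum : ∑ j, |(ν j : ℝ)| ≤ ‖pc (zc ν - 2 • ξ) (zc ν)‖ + ∑ j, (2 * ‖ξ j‖ + 1) ^ 2 / 4 := by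
    calc ∑ j, |(ν j : ℝ)| ≤ (pc (zc ν - 2 • ξ) (zc ν)).re + ∑ j, (2 * ‖ξ j‖ + 1) ^ 2 / 4 := by
          rw [re_pc, ← sum_add_distrib]; exact sum_le_sum fun j _ => hcoord j
      _ ≤ _ := by gcongr; exact Complex.re_le_norm _
  exact hrp.trans (by gcongr)

lemma exists_le_norm_pc (ξ : Fin n → ℂ) (C : ℝ) :
    ∃ N : ℕ, ∀ ν : Fin n → ℤ, (N : ℤ) < rp ν → C ≤ ‖pc (zc ν - 2 • ξ) (zc ν)‖ := by
  set K := ∑ j, (2 * ‖ξ j‖ + 1) ^ 2 / 4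
  refine ⟨⌈n * (C + K)⌉₊, fun ν hν => ?_⟩
  have hlt : (n : ℝ) * (C + K) < n * (‖pc (zc ν - 2 • ξ) (zc ν)‖ + K) :=
    calc (n : ℝ) * (C + K) ≤ ⌈n * (C + K)⌉₊ := Nat.le_ceil _
      _ < rp ν := by exact_mod_cast hν
      _ ≤ _ := rp_le_norm_pc ξ ν
  linarith [lt_of_mul_lt_mul_left hlt (Nat.cast_nonneg n)]

lemma exists_pos_le_norm_pc {ξ : Fin n → ℂ} (hξ : ξ ∈ Uset n) (N : ℕ) :
    ∃ δ > 0, ∀ ν : Fin n → ℤ, dominant ν → ν ≠ 0 → rp ν ≤ N →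
      δ ≤ ‖pc (zc ν - 2 • ξ) (zc ν)‖ := by
  classical
  set F := (Fintype.piFinset fun _ : Fin n => Icc (-(N : ℤ)) N).filter
    fun ν => dominant ν ∧ ν ≠ 0
  have hF : ∀ ν ∈ F, ∀ᶠ δ in 𝓝[>] (0 : ℝ), δ ≤ ‖pc (zc ν - 2 • ξ) (zc ν)‖ := by
    intro ν hν
    obtain ⟨-, hdom, hν0⟩ := mem_filter.mp hν
    exact nhdsWithin_le_nhds <| eventually_le_nhds <| norm_pos_iff.mpr (hξ ν hdom hν0)
  -- a `δ` close enough to `0⁺` lies below each of the finitely many positive values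
  obtain ⟨δ, hδF, hδ⟩ := ((eventually_all_finset F).2 hF).and self_mem_nhdsWithin |>.exists
  refine ⟨δ, hδ, fun ν hdom hν0 hN => hδF ν (mem_filter.mpr ⟨?_, hdom, hν0⟩)⟩
  exact Fintype.mem_piFinset.mpr fun j => mem_Icc.mpr (abs_le.mp ((abs_le_rp hdom j).trans hN))

section Couplings

variable (g : ℂ) (c : ℝ)

lemma kParam_fst_mul_sub_one :
    (kParam g c).1 * ((kParam g c).1 - 1) = (Real.exp c : ℂ) := by
  have hs := Real.sq_sqrt (by positivity : (0 : ℝ) ≤ 1 + 4 * Real.exp c)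
  have : (1 + √(1 + 4 * Real.exp c)) / 2 * ((1 + √(1 + 4 * Real.exp c)) / 2 - 1)
      = Real.exp c := by nlinarith
  simp only [kParam]
  exact_mod_cast this

lemma kParam_snd_snd_mul_sub_one :
    (kParam g c).2.2 * ((kParam g c).2.2 - 1) = (Real.exp c ^ 2 / 16 : ℝ) := by
  have hs := Real.sq_sqrt (by positivity : (0 : ℝ) ≤ 1 + Real.exp c ^ 2 / 4)
  have : (1 + √(1 + Real.exp c ^ 2 / 4)) / 2 * ((1 + √(1 + Real.exp c ^ 2 / 4)) / 2 - 1)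
      = Real.exp c ^ 2 / 16 := by nlinarith
  simp only [kParam]
  exact_mod_cast this

lemma norm_kParam_snd_snd_le : ‖(kParam g c).2.2‖ ≤ 1 + Real.exp c / 4 := by
  have hsqrt : √(1 + Real.exp c ^ 2 / 4) ≤ 1 + Real.exp c / 2 :=
    Real.sqrt_le_iff.mpr ⟨by positivity, by nlinarith [Real.exp_pos c]⟩
  rw [kParam, Complex.norm_real, Real.norm_of_nonneg (by positivity)]
  linarith

/-- A common bound for the rescaled couplings `e^{-c⟨α,ρ⟩} a^cs_α(k^(c))`, `c ≥ 0`. -/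
def couplingBound : ℝ := (2 * ‖g‖ + 2) ^ 2

variable {c}

lemma norm_short_coupling_le (hc : 0 ≤ c) :
    ‖(kParam g c).2.1 * ((kParam g c).2.1 + 2 * (kParam g c).2.2 - 1)‖
      ≤ couplingBound g * Real.exp c := by
  have hk₁ : ‖(kParam g c).2.1‖ = 2 * ‖g‖ := by simp [kParam]
  have hsum : ‖(kParam g c).2.1 + 2 * (kParam g c).2.2 - 1‖ ≤ 2 * ‖g‖ + 3 + Real.exp c / 2 := by
    have h₁ := norm_sub_le ((kParam g c).2.1 + 2 * (kParam g c).2.2) 1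
    have h₂ := norm_add_le (kParam g c).2.1 (2 * (kParam g c).2.2)
    simp only [norm_one, norm_mul, Complex.norm_ofNat] at h₁ h₂
    linarith [norm_kParam_snd_snd_le g c]
  have hexp : 1 ≤ Real.exp c := Real.one_le_exp hc
  rw [norm_mul, hk₁, couplingBound]
  calc 2 * ‖g‖ * ‖(kParam g c).2.1 + 2 * (kParam g c).2.2 - 1‖
      ≤ 2 * ‖g‖ * (2 * ‖g‖ + 3 + Real.exp c / 2) := by gcongr
    _ ≤ _ := by
        have hE : 0 ≤ Real.exp c - 1 := by linarith
        nlinarith [norm_nonneg g, mul_nonneg (sq_nonneg ‖g‖) hE, mul_nonneg (norm_nonneg g) hE]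

lemma norm_middle_coupling_le :
    ‖2 * (kParam g c).1 * ((kParam g c).1 - 1)‖ ≤ couplingBound g * Real.exp c := by
  rw [mul_assoc, kParam_fst_mul_sub_one, norm_mul, Complex.norm_real, couplingBound,
    Real.norm_of_nonneg (Real.exp_pos c).le, Complex.norm_ofNat]
  gcongr
  nlinarith [norm_nonneg g]

lemma norm_long_coupling_le :
    ‖4 * (kParam g c).2.2 * ((kParam g c).2.2 - 1)‖ ≤ couplingBound g * Real.exp c ^ 2 := by
  rw [mul_assoc, kParam_snd_snd_mul_sub_one, norm_mul, Complex.norm_real, couplingBound,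
    Real.norm_of_nonneg (by positivity), Complex.norm_ofNat]
  have : (1 : ℝ) / 4 ≤ (2 * ‖g‖ + 2) ^ 2 := by nlinarith [norm_nonneg g]
  nlinarith [mul_le_mul_of_nonneg_right this (sq_nonneg (Real.exp c))]

end Couplings

lemma norm_damp_mul_mul_le {c : ℝ} (hc : 0 ≤ c) {l : ℕ} (hl : 1 ≤ l) {α ν : Fin n → ℤ} {m : ℕ}
    (hm : 1 ≤ m) (hmα : (m : ℤ) ≤ rp α) {K : ℂ} {B : ℝ} (hB : 0 ≤ B)
    (hK : ‖K‖ ≤ B * Real.exp c ^ m) {a : (Fin n → ℤ) → ℂ} {E : ℝ}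
    (ha : ∀ μ, rp μ + l ≤ rp ν → ‖a μ‖ ≤ E) :
    ‖damp n c l α * K * a (ν - l • α)‖ ≤ B * E := by
  have hm' : (m : ℝ) ≤ rp α := by exact_mod_cast hmα
  have hl' : (1 : ℝ) ≤ l := by exact_mod_cast hl
  have hmc : (m : ℝ) * c ≤ c * l * rp α := by
    nlinarith [mul_le_mul_of_nonneg_left hl' (hm'.trans' (Nat.cast_nonneg m)),
      Nat.cast_nonneg (α := ℝ) m]
  have hdamp : ‖damp n c l α * K‖ ≤ B := by
    rw [norm_mul, damp, Complex.norm_exp_ofReal]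
    calc Real.exp (-(c * l * rp α)) * ‖K‖ ≤ Real.exp (-(m * c)) * (B * Real.exp c ^ m) := by
          gcongr
      _ = B := by
          rw [← Real.exp_nat_mul, mul_left_comm, ← Real.exp_add, neg_add_cancel, Real.exp_zero,
            mul_one]
  refine (norm_mul_le _ _).trans (mul_le_mul hdamp (ha _ ?_) (norm_nonneg _) hB)
  rw [rp_sub, rp_nsmul]
  nlinarith

lemma sum_Icc_mul_exp_neg_le {ε : ℝ} (hε : 0 < ε) (L : ℕ) :
    ∑ l ∈ Icc 1 L, (l : ℝ) * Real.exp (-(ε * l)) ≤ Real.exp (-ε) / (1 - Real.exp (-ε)) ^ 2 := by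
  have hr : ‖Real.exp (-ε)‖ < 1 := by
    rw [Real.norm_of_nonneg (Real.exp_pos _).le]
    exact Real.exp_lt_one_iff.mpr (by linarith)
  refine (sum_congr rfl fun l _ => ?_).trans_le <|
    sum_le_hasSum (Icc 1 L) (fun l _ => by positivity) (hasSum_coe_mul_geometric_of_norm_lt_one hr)
  rw [← Real.exp_nat_mul, mul_neg, mul_comm (l : ℝ) ε]

def recurrenceConst (n : ℕ) (g : ℂ) (ε : ℝ) : ℝ :=
  2 * n * (n + 1) * couplingBound g * (Real.exp (-ε) / (1 - Real.exp (-ε)) ^ 2)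

lemma recurrenceConst_nonneg (n : ℕ) (g : ℂ) (ε : ℝ) : 0 ≤ recurrenceConst n g ε := by
  unfold recurrenceConst couplingBound
  positivity

lemma norm_csRHS_le (g : ℂ) {c : ℝ} (hc : 0 ≤ c) {ε E : ℝ} (hε : 0 < ε) (hE : 0 ≤ E)
    (a : (Fin n → ℤ) → ℂ) (ν : Fin n → ℤ)
    (ha : ∀ l : ℕ, 1 ≤ l → ∀ μ, rp μ + l ≤ rp ν → ‖a μ‖ ≤ E * Real.exp (-(ε * l))) :
    ‖csRHS (kParam g c) c a ν‖ ≤ recurrenceConst n g ε * E := by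
  set B := couplingBound g
  have hB : 0 ≤ B := sq_nonneg _
  have hterm : ∀ l : ℕ, 1 ≤ l → ∀ (α : Fin n → ℤ) (m : ℕ) (K : ℂ), 1 ≤ m → (m : ℤ) ≤ rp α →
      ‖K‖ ≤ B * Real.exp c ^ m →
      ‖damp n c l α * K * a (ν - l • α)‖ ≤ B * (E * Real.exp (-(ε * l))) :=
    fun l hl α m K hm hmα hK => norm_damp_mul_mul_le hc hl hm hmα hB hK (ha l hl)
  have hj : ∀ j : Fin n, 1 ≤ rp (eZ n j) := fun j => by rw [rp_eZ]; omega
  unfold csRHS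
  calc _ ≤ ∑ l ∈ Icc 1 (rp ν).toNat, 2 * n * (n + 1) * B * E * (l * Real.exp (-(ε * l))) := by
        refine (norm_sum_le _ _).trans (sum_le_sum fun l hl => ?_)
        have hl : 1 ≤ l := (mem_Icc.mp hl).1
        set X := B * (E * Real.exp (-(ε * l)))
        rw [norm_mul, Complex.norm_natCast]
        calc (l : ℝ) * ‖_‖ ≤ l * (n * X + n * X + n * (n * (2 * X))) := by
              gcongr
              refine norm_add₃_le.trans (add_le_add (add_le_add ?_ ?_) ?_)
              · refine (norm_sum_le_of_le _ fun j _ => hterm l hl _ 1 _ le_rfl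
                  (by simpa using hj j) (by simpa using norm_short_coupling_le g hc)).trans_eq
                  (by simp [X])
              · refine (norm_sum_le_of_le _ fun j _ => hterm l hl _ 2 _ one_le_two ?_
                  (norm_long_coupling_le g)).trans_eq (by simp [X])
                rw [rp_nsmul, rp_eZ]
                omega
              · have hK : ‖2 * (kParam g c).1 * ((kParam g c).1 - 1)‖ ≤ B * Real.exp c ^ 1 := by
                  simpa using norm_middle_coupling_le g
                have hX : 0 ≤ X := mul_nonneg hB (by positivity)
                calc ‖∑ j, ∑ j' ∈ Ioi j, _‖ ≤ ∑ j : Fin n, ∑ _j' ∈ Ioi j, (X + X) := by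
                      refine norm_sum_le_of_le _ fun j _ => norm_sum_le_of_le _ fun j' hj' => ?_
                      have hjj' : j < j' := mem_Ioi.mp hj'
                      refine (norm_add_le _ _).trans (add_le_add (hterm l hl _ 1 _ le_rfl ?_ hK)
                        (hterm l hl _ 1 _ le_rfl ?_ hK))
                      · rw [rp_add, rp_eZ, rp_eZ]; omega
                      · rw [rp_sub, rp_eZ, rp_eZ]; simp only [Fin.lt_def] at hjj'; omega
                  _ ≤ ∑ _j : Fin n, n * (2 * X) := by
                      refine sum_le_sum fun j _ => ?_
                      rw [sum_const, nsmul_eq_mul, ← two_mul]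
                      gcongr
                      simpa using card_le_univ (Ioi j)
                  _ = n * (n * (2 * X)) := by simp
          _ = _ := by ring
    _ = 2 * n * (n + 1) * B * E * ∑ l ∈ Icc 1 (rp ν).toNat, l * Real.exp (-(ε * l)) := by
        rw [mul_sum]
    _ ≤ 2 * n * (n + 1) * B * E * (Real.exp (-ε) / (1 - Real.exp (-ε)) ^ 2) := by
        gcongr
        exact sum_Icc_mul_exp_neg_le hε _
    _ = _ := by unfold recurrenceConst; ring

lemma le_mul_exp_of_recursive_bound {ι : Type*} (w : ι → ℤ) (b : ι → ℝ) {A D ε : ℝ} {N : ℕ}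
    (hw : ∀ i, 0 ≤ w i) (hA : 0 ≤ A) (hD : 1 ≤ D) (hbase : ∀ i, w i = 0 → b i ≤ A)
    (hsmall : ∀ i P, 0 < w i → w i ≤ N → 0 ≤ P →
      (∀ j, w j < w i → b j ≤ P * Real.exp (ε * w j)) → b i ≤ D * P * Real.exp (ε * w i))
    (hlarge : ∀ i P, N < w i → 0 ≤ P →
      (∀ j, w j < w i → b j ≤ P * Real.exp (ε * w j)) → b i ≤ P * Real.exp (ε * w i))
    (i : ι) : b i ≤ A * D ^ N * Real.exp (ε * w i) := by
  suffices key : ∀ m : ℕ, ∀ i, w i = m → b i ≤ A * D ^ min m N * Real.exp (ε * m) by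
    obtain ⟨m, hm⟩ := Int.eq_ofNat_of_zero_le (hw i)
    refine (key m i hm).trans ?_
    rw [hm, Int.cast_natCast]
    gcongr
    exact min_le_right _ _
  intro m
  induction m using Nat.strong_induction_on with
  | _ m ih =>
  intro i hi
  have hprev : ∀ j, w j < w i → b j ≤ A * D ^ min (m - 1) N * Real.exp (ε * w j) := by
    intro j hj
    obtain ⟨m', hm'⟩ := Int.eq_ofNat_of_zero_le (hw j)
    refine (ih m' (by omega) j hm').trans ?_
    rw [hm', Int.cast_natCast]
    gcongr
    omega
  rcases Nat.eq_zero_or_pos m with rfl | hm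
  · simpa using hbase i hi
  by_cases hmN : m ≤ N
  · calc b i ≤ D * (A * D ^ min (m - 1) N) * Real.exp (ε * w i) :=
          hsmall i _ (by omega) (by omega) (by positivity) hprev
      _ = A * D ^ min m N * Real.exp (ε * m) := by
          have hpow : D ^ m = D * D ^ (m - 1) := by rw [← pow_succ', Nat.sub_add_cancel hm]
          rw [hi, Int.cast_natCast, min_eq_left hmN, min_eq_left (by omega), hpow]
          ring
  · calc b i ≤ A * D ^ min (m - 1) N * Real.exp (ε * w i) :=
          hlarge i _ (by omega) (by positivity) hprev
      _ = A * D ^ min m N * Real.exp (ε * m) := by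
          rw [hi, Int.cast_natCast, min_eq_right (by omega), min_eq_right (by omega)]

section Coefficients

variable {g : ℂ} {c : ℝ} {Δ : ℂ} {ξ : Fin n → ℂ} {a : (Fin n → ℤ) → ℂ}

lemma norm_pc_mul_norm_le (hc : 0 ≤ c) {ε : ℝ} (hε : 0 < ε)
    (ha : IsHCcsResc (kParam g c) c Δ ξ a) {ν : Fin n → ℤ} (hν : dominant ν) (hν0 : ν ≠ 0)
    {P : ℝ} (hP : 0 ≤ P)
    (hprev : ∀ μ, dominant μ → rp μ < rp ν → ‖a μ‖ ≤ P * Real.exp (ε * rp μ)) :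
    ‖pc (zc ν - 2 • ξ) (zc ν)‖ * ‖a ν‖ ≤ recurrenceConst n g ε * (P * Real.exp (ε * rp ν)) := by
  rw [← norm_mul, ha.2.2 ν hν hν0]
  refine norm_csRHS_le g hc hε (by positivity) a ν fun l hl μ hμ => ?_
  by_cases hμν : dominant μ
  · calc ‖a μ‖ ≤ P * Real.exp (ε * rp μ) := hprev μ hμν (by omega)
      _ ≤ P * Real.exp (ε * (rp ν - l)) := by
          gcongr
          exact_mod_cast Int.le_sub_right_of_add_le hμ
      _ = P * Real.exp (ε * rp ν) * Real.exp (-(ε * l)) := by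
          rw [mul_assoc, ← Real.exp_add]
          ring_nf
  · rw [ha.2.1 μ hμν, norm_zero]
    positivity

lemma norm_le_of_isHCcsResc (hc : 0 ≤ c) {ε : ℝ} (hε : 0 < ε) (hξ : ξ ∈ Uset n)
    (ha : IsHCcsResc (kParam g c) c Δ ξ a) {N : ℕ} {δ : ℝ} (hδ : 0 < δ)
    (hsmall : ∀ ν, dominant ν → ν ≠ 0 → rp ν ≤ N → δ ≤ ‖pc (zc ν - 2 • ξ) (zc ν)‖)
    (hlarge : ∀ ν, (N : ℤ) < rp ν → recurrenceConst n g ε ≤ ‖pc (zc ν - 2 • ξ) (zc ν)‖)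
    {ν : Fin n → ℤ} (hν : dominant ν) :
    ‖a ν‖ ≤ ‖Δ‖ * max 1 (recurrenceConst n g ε / δ) ^ N * Real.exp (ε * rp ν) := by
  set C := recurrenceConst n g ε
  have hC : 0 ≤ C := recurrenceConst_nonneg n g ε
  have hstep : ∀ (μ : {μ // dominant μ}) P, 0 < rp μ.1 → 0 ≤ P →
      (∀ μ' : {μ // dominant μ}, rp μ'.1 < rp μ.1 → ‖a μ'.1‖ ≤ P * Real.exp (ε * rp μ'.1)) →
      0 < ‖pc (zc μ.1 - 2 • ξ) (zc μ.1)‖ ∧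
        ‖a μ.1‖ ≤ C * (P * Real.exp (ε * rp μ.1)) / ‖pc (zc μ.1 - 2 • ξ) (zc μ.1)‖ := by
    rintro ⟨μ, hμ⟩ P hrp hP hprev
    have hμ0 : μ ≠ 0 := by rintro rfl; simp [rp] at hrp
    have hpc := norm_pos_iff.mpr (hξ μ hμ hμ0)
    refine ⟨hpc, (le_div_iff₀' hpc).mpr ?_⟩
    exact norm_pc_mul_norm_le hc hε ha hμ hμ0 hP fun μ' hμ' h => hprev ⟨μ', hμ'⟩ h
  refine le_mul_exp_of_recursive_bound (fun μ : {μ // dominant μ} => rp μ.1) (fun μ => ‖a μ.1‖)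
    (fun μ => rp_nonneg μ.2) (norm_nonneg Δ) (le_max_left _ _) ?_ ?_ ?_ ⟨ν, hν⟩
  · rintro ⟨μ, hμ⟩ h
    obtain rfl := eq_zero_of_rp_eq_zero hμ h
    exact ha.1 ▸ le_rfl
  · intro μ P hrp hN hP hprev
    obtain ⟨hpc, hle⟩ := hstep μ P hrp hP hprev
    calc ‖a μ.1‖ ≤ C * (P * Real.exp (ε * rp μ.1)) / δ :=
          hle.trans (div_le_div_of_nonneg_left (by positivity) hδ
            (hsmall μ.1 μ.2 (by rintro h; simp [h, rp] at hrp) hN))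
      _ ≤ max 1 (C / δ) * P * Real.exp (ε * rp μ.1) := by
          rw [mul_assoc, mul_div_right_comm]
          gcongr
          exact le_max_right _ _
  · intro μ P hrp hP hprev
    obtain ⟨hpc, hle⟩ := hstep μ P (by omega) hP hprev
    refine hle.trans ((div_le_iff₀ hpc).mpr ?_)
    rw [mul_comm]
    gcongr
    exact hlarge μ.1 hrp

end Coefficients

theorem statement17_general (n : ℕ) (g : ℂ)
    (T : Finset (Fin n → ℤ))
    (ξ : Fin n → ℂ) (hξ : ξ ∈ Uset n)
    (ahat : ℝ → (Fin n → ℤ) → ℂ)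
    (hahat : ∀ c : ℝ, 0 ≤ c →
      IsHCcsResc (kParam g c) c (∏ μ ∈ T, pc (zc μ - 2 • ξ) (zc μ)) ξ (ahat c))
    (ε : ℝ) (hε : 0 < ε) :
    ∃ A : ℝ, 0 < A ∧ ∀ c : ℝ, 0 ≤ c → ∀ ν : Fin n → ℤ, dominant ν →
      ‖ahat c ν‖ ≤ A * Real.exp (ε * ((rp ν : ℝ))) := by
  obtain ⟨N, hlarge⟩ := exists_le_norm_pc ξ (recurrenceConst n g ε)
  obtain ⟨δ, hδ, hsmall⟩ := exists_pos_le_norm_pc hξ N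
  set Δ := ∏ μ ∈ T, pc (zc μ - 2 • ξ) (zc μ)
  refine ⟨(‖Δ‖ + 1) * max 1 (recurrenceConst n g ε / δ) ^ N, by positivity,
    fun c hc ν hν => ?_⟩
  refine (norm_le_of_isHCcsResc hc hε hξ (hahat c hc) hδ hsmall hlarge hν).trans ?_
  gcongr
  linarith

/-- Uniform growth bound for the rescaled Calogero–Sutherland Harish-Chandra coefficients:
for every `ε > 0` there is `A > 0` with `|â^{cs}_ν(ξ;k^{(c)})| ≤ A e^{ε⟨ν,ρ⟩}` for all
`c ≥ 0` and all `ν ≥ 0`. -/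
theorem statement17 (n : ℕ) (hn : 1 ≤ n)
    (U : Set (Fin n → ℂ)) (hUo : IsOpen U) (hUb : Bornology.IsBounded U)
    (hUc : IsConnected U) (g : ℂ)
    (T : Finset (Fin n → ℤ))
    (hT : ∀ μ : Fin n → ℤ, μ ∈ T ↔ dominant μ ∧ μ ≠ 0 ∧
        ∃ ζ ∈ closure U, pc (zc μ - 2 • ζ) (zc μ) = 0)
    (ξ : Fin n → ℂ) (hξU : ξ ∈ U) (hξ : ξ ∈ Uset n)
    (ahat : ℝ → (Fin n → ℤ) → ℂ)
    (hahat : ∀ c : ℝ, 0 ≤ c →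
      IsHCcsResc (kParam g c) c (∏ μ ∈ T, pc (zc μ - 2 • ξ) (zc μ)) ξ (ahat c))
    (ε : ℝ) (hε : 0 < ε) :
    ∃ A : ℝ, 0 < A ∧ ∀ c : ℝ, 0 ≤ c → ∀ ν : Fin n → ℤ, dominant ν →
      ‖ahat c ν‖ ≤ A * Real.exp (ε * ((rp ν : ℝ))) :=
  statement17_general n g T ξ hξ ahat hahat ε hε

end TodaBC
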